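/- arXiv:1507.05612 — 9 statements merged into one kernel-verified Lean document; each statement's English description precedes it below -/
import Mathlib

section
/- Let T be a realizable target specification, L a consistent learner, and τ a teacher. Then the sample sequence generated by L and τ is consistent with the target specification: for every n : ℕ, T ⊆ κ (seq n). -/
/-- The sample sequence generated by learner `L` and teacher `τ`, starting from `init`. -/
def sampleSeq {S H : Type*} [SemilatticeSup S] (L : S → H) (τ : H → S) (init : S) : ℕ → S
  | 0 => init
  | n + 1 => sampleSeq L τ init n ⊔ τ (L (sampleSeq L τ init n))

/-- the sample sequence generated by a consistent learner and a teacher is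
consistent with the realizable target specification. -/
theorem sample_sequence_consistent_with_target {C H S : Type*} [SemilatticeSup S] [OrderBot S]
    (γ : H → C) (κ : S → Set C)
    (hbot : κ ⊥ = Set.univ)
    (hsup : ∀ s₁ s₂ : S, κ (s₁ ⊔ s₂) = κ s₁ ∩ κ s₂)
    (T : Set C) (hT : ∃ h : H, γ h ∈ T)
    (L : S → H)
    (hL : ∀ s : S, (∃ h : H, γ h ∈ κ s) → γ (L s) ∈ κ s)
    (τ : H → S)
    (hprog₁ : ∀ h : H, γ h ∈ T → τ h = ⊥)
    (hprog₂ : ∀ h : H, γ h ∉ T → γ h ∉ κ (τ h))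
    (hhonest : ∀ h : H, T ⊆ κ (τ h)) :
    ∀ n : ℕ, T ⊆ κ (sampleSeq L τ ⊥ n) := by
  intro n
  induction n with
  | zero => simp [sampleSeq, hbot]
  | succ n ih =>
    rw [sampleSeq, hsup]
    exact Set.subset_inter ih (hhonest _)
end

section
/- Let T be a realizable target specification, L a consistent learner, and τ a teacher. Then along the sample sequence generated by L and τ the learner makes progress: for every n : ℕ, either γ (L (seq n)) ∈ T, or both κ (seq (n+1)) is a strict subset of κ (seq n) and γ (L (seq n)) ∉ κ (seq (n+1)). -/
/-- along the sample sequence, the learner makes progress. -/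
theorem learner_makes_progress {C H S : Type*} [SemilatticeSup S] [OrderBot S]
    (γ : H → C) (κ : S → Set C)
    (hbot : κ ⊥ = Set.univ)
    (hsup : ∀ s₁ s₂ : S, κ (s₁ ⊔ s₂) = κ s₁ ∩ κ s₂)
    (T : Set C) (hT : ∃ h : H, γ h ∈ T)
    (L : S → H)
    (hL : ∀ s : S, (∃ h : H, γ h ∈ κ s) → γ (L s) ∈ κ s)
    (τ : H → S)
    (hprog₁ : ∀ h : H, γ h ∈ T → τ h = ⊥)
    (hprog₂ : ∀ h : H, γ h ∉ T → γ h ∉ κ (τ h))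
    (hhonest : ∀ h : H, T ⊆ κ (τ h)) :
    ∀ n : ℕ, γ (L (sampleSeq L τ ⊥ n)) ∈ T ∨
      (κ (sampleSeq L τ ⊥ (n + 1)) ⊂ κ (sampleSeq L τ ⊥ n) ∧
        γ (L (sampleSeq L τ ⊥ n)) ∉ κ (sampleSeq L τ ⊥ (n + 1))) := by
  have hsub : ∀ n : ℕ, T ⊆ κ (sampleSeq L τ ⊥ n) := by
    intro n
    induction n with
    | zero => simp [sampleSeq, hbot]
    | succ n ih =>
      rw [show sampleSeq L τ ⊥ (n+1) = _ ⊔ _ from rfl, hsup]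
      exact Set.subset_inter ih (hhonest _)
  intro n
  obtain ⟨h0, hh0⟩ := hT
  have hreal : γ (L (sampleSeq L τ ⊥ n)) ∈ κ (sampleSeq L τ ⊥ n) :=
    hL _ ⟨h0, hsub n hh0⟩
  by_cases hin : γ (L (sampleSeq L τ ⊥ n)) ∈ T
  · exact Or.inl hin
  · right
    have hnk := hprog₂ _ hin
    have heq : κ (sampleSeq L τ ⊥ (n+1)) =
        κ (sampleSeq L τ ⊥ n) ∩ κ (τ (L (sampleSeq L τ ⊥ n))) := by
      rw [show sampleSeq L τ ⊥ (n+1) = _ ⊔ _ from rfl, hsup]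
    have hnot : γ (L (sampleSeq L τ ⊥ n)) ∉ κ (sampleSeq L τ ⊥ (n+1)) := by
      rw [heq]; exact fun hc => hnk hc.2
    refine ⟨⟨by rw [heq]; exact Set.inter_subset_left, ?_⟩, hnot⟩
    intro hle
    exact hnot (hle hreal)
end

section
/- Let the ALF have a complete sample space, let T be a realizable target specification, L a consistent learner, τ a teacher, and let seq : Ordinal → S be a transfinite sample sequence generated by L and τ. Then for every ordinal α: (a) either γ (L (seq α)) ∈ T, or both κ (seq (α+1)) is a strict subset of κ (seq α) and γ (L (seq α)) ∉ κ (seq (α+1)); and (b) T ⊆ κ (seq α). -/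
/-!
Honesty is an invariant of the transfinite sequence: every sample the teacher adds is consistent
with all of `T`, and `κ` sends `⊥` to `univ` and joins and suprema to intersections, so
`T ⊆ κ (seq α)` survives zero, successor and limit stages.
Progress follows: as `T` is realizable and contained in `κ (seq α)`, the sample `seq α` is
realizable, so the learner's hypothesis lies in `κ (seq α)`; if it misses `T`, the teacher's
sample excludes it, and joining that sample cuts `κ` strictly.
-/

section ConsistencyMap

variable {C S : Type*} [CompleteLattice S] {κ : S → Set C}

theorem kappa_iSup (hsSup : ∀ A : Set S, κ (sSup A) = ⋂ s ∈ A, κ s) {ι : Sort*} (f : ι → S) :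
    κ (⨆ i, f i) = ⋂ i, κ (f i) := by
  rw [iSup, hsSup, Set.biInter_range]

theorem kappa_sup_ssubset_and_not_mem (hsup : ∀ s₁ s₂ : S, κ (s₁ ⊔ s₂) = κ s₁ ∩ κ s₂)
    {s t : S} {c : C} (hcs : c ∈ κ s) (hct : c ∉ κ t) :
    κ (s ⊔ t) ⊂ κ s ∧ c ∉ κ (s ⊔ t) := by
  have hc : c ∉ κ (s ⊔ t) := by
    rw [hsup]
    exact fun hc => hct hc.2
  refine ⟨Set.ssubset_iff_subset_ne.2 ⟨?_, ?_⟩, hc⟩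
  · rw [hsup]
    exact Set.inter_subset_left
  · rintro heq
    exact hc (heq ▸ hcs)

theorem subset_kappa_of_transfinite_sup
    (hbot : κ (⊥ : S) = Set.univ)
    (hsup : ∀ s₁ s₂ : S, κ (s₁ ⊔ s₂) = κ s₁ ∩ κ s₂)
    (hsSup : ∀ A : Set S, κ (sSup A) = ⋂ s ∈ A, κ s)
    {T : Set C} {seq step : Ordinal → S} (hstep : ∀ α, T ⊆ κ (step α))
    (hseq0 : seq 0 = ⊥)
    (hseqsucc : ∀ α : Ordinal, seq (α + 1) = seq α ⊔ step α)
    (hseqlim : ∀ α : Ordinal, Order.IsSuccLimit α → seq α = ⨆ β < α, seq β)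
    (α : Ordinal) : T ⊆ κ (seq α) := by
  induction α using Ordinal.limitRecOn with
  | zero =>
    rw [hseq0, hbot]
    exact Set.subset_univ T
  | add_one β ih =>
    rw [hseqsucc, hsup]
    exact Set.subset_inter ih (hstep β)
  | limit β hlim ih =>
    rw [hseqlim β hlim]
    simp only [kappa_iSup hsSup, Set.subset_iInter_iff]
    exact ih

end ConsistencyMap

theorem transfinite_progress_and_honesty_general {C H S : Type*} [CompleteLattice S]
    (γ : H → C) (κ : S → Set C)
    (hbot : κ (⊥ : S) = Set.univ)
    (hsup : ∀ s₁ s₂ : S, κ (s₁ ⊔ s₂) = κ s₁ ∩ κ s₂)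
    (hsSup : ∀ A : Set S, κ (sSup A) = ⋂ s ∈ A, κ s)
    (T : Set C) (hT : ∃ h : H, γ h ∈ T)
    (L : S → H)
    (hL : ∀ s : S, (∃ h : H, γ h ∈ κ s) → γ (L s) ∈ κ s)
    (τ : H → S)
    (hprog₂ : ∀ h : H, γ h ∉ T → γ h ∉ κ (τ h))
    (hhonest : ∀ h : H, T ⊆ κ (τ h))
    (seq : Ordinal → S)
    (hseq0 : seq 0 = ⊥)
    (hseqsucc : ∀ α : Ordinal, seq (α + 1) = seq α ⊔ τ (L (seq α)))
    (hseqlim : ∀ α : Ordinal, Order.IsSuccLimit α → seq α = ⨆ β < α, seq β) :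
    ∀ α : Ordinal,
      (γ (L (seq α)) ∈ T ∨
        (κ (seq (α + 1)) ⊂ κ (seq α) ∧ γ (L (seq α)) ∉ κ (seq (α + 1)))) ∧
      T ⊆ κ (seq α) := by
  have honest : ∀ α, T ⊆ κ (seq α) :=
    subset_kappa_of_transfinite_sup hbot hsup hsSup (fun α => hhonest (L (seq α)))
      hseq0 hseqsucc hseqlim
  intro α
  refine ⟨?_, honest α⟩
  by_cases hmem : γ (L (seq α)) ∈ T
  · exact Or.inl hmem
  · obtain ⟨h, hh⟩ := hT
    have hlearner : γ (L (seq α)) ∈ κ (seq α) := hL _ ⟨h, honest α hh⟩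
    rw [hseqsucc]
    exact Or.inr (kappa_sup_ssubset_and_not_mem hsup hlearner (hprog₂ _ hmem))

/-- progress and honesty along a transfinite sample sequence in an ALF
with a complete sample space. -/
theorem transfinite_progress_and_honesty {C H S : Type*} [CompleteLattice S]
    (γ : H → C) (κ : S → Set C)
    (hbot : κ (⊥ : S) = Set.univ)
    (hsup : ∀ s₁ s₂ : S, κ (s₁ ⊔ s₂) = κ s₁ ∩ κ s₂)
    (hsSup : ∀ A : Set S, κ (sSup A) = ⋂ s ∈ A, κ s)
    (T : Set C) (hT : ∃ h : H, γ h ∈ T)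
    (L : S → H)
    (hL : ∀ s : S, (∃ h : H, γ h ∈ κ s) → γ (L s) ∈ κ s)
    (τ : H → S)
    (hprog₁ : ∀ h : H, γ h ∈ T → τ h = ⊥)
    (hprog₂ : ∀ h : H, γ h ∉ T → γ h ∉ κ (τ h))
    (hhonest : ∀ h : H, T ⊆ κ (τ h))
    (seq : Ordinal → S)
    (hseq0 : seq 0 = ⊥)
    (hseqsucc : ∀ α : Ordinal, seq (α + 1) = seq α ⊔ τ (L (seq α)))
    (hseqlim : ∀ α : Ordinal, Order.IsSuccLimit α → seq α = ⨆ β < α, seq β) :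
    ∀ α : Ordinal,
      (γ (L (seq α)) ∈ T ∨
        (κ (seq (α + 1)) ⊂ κ (seq α) ∧ γ (L (seq α)) ∉ κ (seq (α + 1)))) ∧
      T ⊆ κ (seq α) :=
  transfinite_progress_and_honesty_general γ κ hbot hsup hsSup T hT L hL τ hprog₂ hhonest seq hseq0
    hseqsucc hseqlim
end

section
/- Suppose the hypothesis space H is finite. Let T be a realizable target specification, L a consistent learner, and τ a teacher. Then L converges in finite time: there exists n : ℕ such that γ (L (seq n)) ∈ T, where seq is the sample sequence generated by L and τ. -/
/-- if the hypothesis space is finite, every consistent learner converges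
in finite time (for a realizable target specification and any teacher). -/
theorem finite_hypothesis_space_convergence {C H S : Type*} [Finite H]
    [SemilatticeSup S] [OrderBot S]
    (γ : H → C) (κ : S → Set C)
    (hbot : κ ⊥ = Set.univ)
    (hsup : ∀ s₁ s₂ : S, κ (s₁ ⊔ s₂) = κ s₁ ∩ κ s₂)
    (T : Set C) (hT : ∃ h : H, γ h ∈ T)
    (L : S → H)
    (hL : ∀ s : S, (∃ h : H, γ h ∈ κ s) → γ (L s) ∈ κ s)
    (τ : H → S)
    (hprog₁ : ∀ h : H, γ h ∈ T → τ h = ⊥)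
    (hprog₂ : ∀ h : H, γ h ∉ T → γ h ∉ κ (τ h))
    (hhonest : ∀ h : H, T ⊆ κ (τ h)) :
    ∃ n : ℕ, γ (L (sampleSeq L τ ⊥ n)) ∈ T := by
  obtain ⟨h₀, hh₀⟩ := hT
  set seq := sampleSeq L τ ⊥ with hseq
  have hTsub : ∀ n, T ⊆ κ (seq n) := by
    intro n
    induction n with
    | zero => simp [hseq, sampleSeq, hbot]
    | succ n ih =>
      show T ⊆ κ (seq n ⊔ τ (L (seq n)))
      rw [hsup]
      exact Set.subset_inter ih (hhonest _)
  have hreal : ∀ n, γ (L (seq n)) ∈ κ (seq n) :=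
    fun n => hL _ ⟨h₀, hTsub n hh₀⟩
  by_contra hcon
  push_neg at hcon
  -- κ ∘ seq is decreasing
  have hdec : ∀ n m, n ≤ m → κ (seq m) ⊆ κ (seq n) := by
    intro n m hnm
    induction m with
    | zero => simp_all
    | succ m ih =>
      rcases Nat.lt_or_ge n (m + 1) with h | h
      · have : κ (seq (m + 1)) ⊆ κ (seq m) := by
          show κ (seq m ⊔ τ (L (seq m))) ⊆ _
          rw [hsup]; exact Set.inter_subset_left
        exact this.trans (ih (Nat.lt_succ_iff.mp h))
      · have : n = m + 1 := le_antisymm hnm h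
        subst this; exact subset_rfl
  have hout : ∀ n m, n < m → γ (L (seq n)) ∉ κ (seq m) := by
    intro n m hnm hmem
    have h1 : γ (L (seq n)) ∈ κ (seq (n + 1)) := hdec _ _ hnm hmem
    have h2 : κ (seq (n + 1)) = κ (seq n) ∩ κ (τ (L (seq n))) := hsup _ _
    rw [h2] at h1
    exact hprog₂ _ (hcon n) h1.2
  have hinj : Function.Injective (fun n => L (seq n)) := by
    intro n m hnm
    simp only at hnm
    by_contra hne
    rcases Nat.lt_or_gt_of_ne hne with h | h
    · exact hout n m h (hnm ▸ hreal m)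
    · exact hout m n h (hnm ▸ hreal n)
  exact not_injective_infinite_finite _ hinj
end

section
/- Let ≼ be a complexity ordering on the hypothesis space H, let T be a realizable target specification, let L be a ≼-Occam learner, and let τ be a teacher. Then L converges to a ≼-minimal target element: there exists n : ℕ such that γ (L (seq n)) ∈ T and, for every h : H with γ h ∈ T, L (seq n) ≼ h; here seq is the sample sequence generated by L and τ. -/
/-- an Occam learner (w.r.t. a complexity ordering) converges in finite time
to a minimal target element. -/
theorem occam_learner_convergence {C H S : Type*} [SemilatticeSup S] [OrderBot S]
    (γ : H → C) (κ : S → Set C)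
    (hbot : κ ⊥ = Set.univ)
    (hsup : ∀ s₁ s₂ : S, κ (s₁ ⊔ s₂) = κ s₁ ∩ κ s₂)
    -- complexity ordering ≼ on H
    (r : H → H → Prop)
    (hrefl : ∀ h : H, r h h)
    (htrans : ∀ a b c : H, r a b → r b c → r a c)
    (htotal : ∀ a b : H, r a b ∨ r b a)
    (hfin : ∀ h : H, {h' : H | r h' h}.Finite)
    -- realizable target specification
    (T : Set C) (hT : ∃ h : H, γ h ∈ T)
    -- L is a ≼-Occam learner: consistent, and always proposes a ≼-smallest consistent hypothesis
    (L : S → H)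
    (hL : ∀ s : S, (∃ h : H, γ h ∈ κ s) → γ (L s) ∈ κ s)
    (hOccam : ∀ s : S, (∃ h : H, γ h ∈ κ s) → ∀ h : H, γ h ∈ κ s → r (L s) h)
    -- teacher
    (τ : H → S)
    (hprog₁ : ∀ h : H, γ h ∈ T → τ h = ⊥)
    (hprog₂ : ∀ h : H, γ h ∉ T → γ h ∉ κ (τ h))
    (hhonest : ∀ h : H, T ⊆ κ (τ h)) :
    ∃ n : ℕ, γ (L (sampleSeq L τ ⊥ n)) ∈ T ∧
      ∀ h : H, γ h ∈ T → r (L (sampleSeq L τ ⊥ n)) h := by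
  obtain ⟨h₀, hh₀⟩ := hT
  set seq := sampleSeq L τ ⊥ with hseq
  -- T ⊆ κ (seq n) for all n
  have hTsub : ∀ n, T ⊆ κ (seq n) := by
    intro n
    induction n with
    | zero => simp [hseq, sampleSeq, hbot]
    | succ n ih =>
      show T ⊆ κ (seq n ⊔ τ (L (seq n)))
      rw [hsup]
      exact Set.subset_inter ih (hhonest _)
  have hreal : ∀ n, ∃ h : H, γ h ∈ κ (seq n) := fun n => ⟨h₀, hTsub n hh₀⟩
  -- antitone
  have hmono : ∀ n m, n ≤ m → κ (seq m) ⊆ κ (seq n) := by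
    intro n m hnm
    induction m with
    | zero => simp_all
    | succ m ih =>
      rcases Nat.lt_or_ge n (m + 1) with hlt | hge
      · have : κ (seq (m + 1)) ⊆ κ (seq m) := by
          show κ (seq m ⊔ τ (L (seq m))) ⊆ κ (seq m)
          rw [hsup]; exact Set.inter_subset_left
        exact this.trans (ih (Nat.lt_succ_iff.mp hlt))
      · have : n = m + 1 := le_antisymm hnm hge
        subst this; exact subset_rfl
  -- if no success ever, derive contradiction
  by_contra hcon
  push_neg at hcon
  have hfail : ∀ n, γ (L (seq n)) ∉ T := by
    intro n hn
    obtain ⟨h, hhT, hnr⟩ := hcon n hn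
    exact hnr (hOccam _ (hreal n) h (hTsub n hhT))
  have hexcl : ∀ n, γ (L (seq n)) ∉ κ (seq (n + 1)) := by
    intro n hmem
    have : γ (L (seq n)) ∈ κ (seq n ⊔ τ (L (seq n))) := hmem
    rw [hsup] at this
    exact hprog₂ _ (hfail n) this.2
  -- injectivity of n ↦ L (seq n)
  have key : ∀ n m : ℕ, n < m → L (seq n) ≠ L (seq m) := by
    intro n m hlt heq
    have h1 : γ (L (seq m)) ∈ κ (seq m) := hL _ (hreal m)
    have h2 : γ (L (seq n)) ∉ κ (seq m) := fun hc =>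
      hexcl n (hmono (n + 1) m hlt hc)
    rw [heq] at h2
    exact h2 h1
  have hinj : Function.Injective (fun n => L (seq n)) := by
    intro n m hnm
    by_contra hne
    rcases lt_or_gt_of_ne hne with h | h
    · exact key n m h hnm
    · exact key m n h hnm.symm
  -- all values land in a finite set
  have hrange : ∀ n, L (seq n) ∈ {h' : H | r h' h₀} := fun n =>
    hOccam _ (hreal n) h₀ (hTsub n hh₀)
  exact Set.infinite_of_injective_forall_mem hinj hrange (hfin h₀)
end

section
/- Consider the ALF over a type D with concept space and hypothesis space both equal to Set D, γ the identity, sample space consisting of pairs s = (P, N) of subsets of D ordered by componentwise inclusion with componentwise union as join and (∅, ∅) as bottom, and κ (P, N) = {R : Set D | P ⊆ R ∧ R ∩ N = ∅}. Let T : Set (Set D) be a target specification and suppose τ : Set D → Set D × Set D is a teacher for this instance. Let G = ⋃ H, (τ H).1 and B = ⋃ H, (τ H).2 be the unions of all positive and all negative examples returned by τ. Then T = {R : Set D | B ∩ R = ∅ ∧ G ⊆ R}. -/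
/-- if a target specification `T` over the positive/negative-example ALF
(with concept and hypothesis space `Set D` and `γ = id`) admits a teacher `τ`, then `T`
is exactly the set of concepts excluding all negative examples `B` and including all
positive examples `G` ever returned by the teacher. -/
theorem teacher_forces_good_bad_shape {D : Type*} (T : Set (Set D))
    (τ : Set D → Set D × Set D)
    -- progress
    (hprog₁ : ∀ h : Set D, h ∈ T → τ h = (∅, ∅))
    (hprog₂ : ∀ h : Set D, h ∉ T → h ∉ {R : Set D | (τ h).1 ⊆ R ∧ R ∩ (τ h).2 = ∅})
    -- honesty
    (hhonest : ∀ h : Set D, T ⊆ {R : Set D | (τ h).1 ⊆ R ∧ R ∩ (τ h).2 = ∅}) :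
    T = {R : Set D | (⋃ h : Set D, (τ h).2) ∩ R = ∅ ∧ (⋃ h : Set D, (τ h).1) ⊆ R} := by
  ext R
  constructor
  · intro hR
    refine ⟨?_, ?_⟩
    · ext x
      simp only [Set.mem_inter_iff, Set.mem_iUnion, Set.mem_empty_iff_false, iff_false, not_and]
      rintro ⟨h, hx⟩ hxR
      have := (hhonest h hR).2
      exact (Set.eq_empty_iff_forall_notMem.mp this x) ⟨hxR, hx⟩
    · intro x hx
      rcases Set.mem_iUnion.mp hx with ⟨h, hx⟩
      exact (hhonest h hR).1 hx
  · rintro ⟨hB, hG⟩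
    by_contra hRT
    apply hprog₂ R hRT
    refine ⟨fun x hx => hG (Set.mem_iUnion.mpr ⟨R, hx⟩), ?_⟩
    ext x
    simp only [Set.mem_inter_iff, Set.mem_empty_iff_false, iff_false, not_and]
    intro hxR hx
    exact (Set.eq_empty_iff_forall_notMem.mp hB x) ⟨Set.mem_iUnion.mpr ⟨R, hx⟩, hxR⟩
end

section
/- Let P N : Set ℤ with P nonempty, and suppose the sample (P, N) is realizable by an interval: there exists (l, r) : WithBot ℤ × WithTop ℤ with P ⊆ I(l, r) and I(l, r) ∩ N = ∅. Then there is a greatest consistent interval: there exists a consistent pair (l, r) such that every consistent pair (l', r') satisfies l ≤ l' and r' ≤ r. -/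
/-- The set of integers described by the interval `(l, r)` over `ℤ ∪ {−∞, ∞}`. -/
def Iset (l : WithBot ℤ) (r : WithTop ℤ) : Set ℤ :=
  {x : ℤ | l ≤ (x : WithBot ℤ) ∧ (x : WithTop ℤ) ≤ r}

/-- a realizable positive/negative sample over intervals with a nonempty
set of positive examples admits a greatest consistent interval. -/
theorem exists_greatest_consistent_interval (P N : Set ℤ) (hP : P.Nonempty)
    (hreal : ∃ (l : WithBot ℤ) (r : WithTop ℤ), P ⊆ Iset l r ∧ Iset l r ∩ N = ∅) :
    ∃ (l : WithBot ℤ) (r : WithTop ℤ), (P ⊆ Iset l r ∧ Iset l r ∩ N = ∅) ∧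
      ∀ (l' : WithBot ℤ) (r' : WithTop ℤ), P ⊆ Iset l' r' ∧ Iset l' r' ∩ N = ∅ →
        l ≤ l' ∧ r' ≤ r := by
  obtain ⟨p₀, hp₀⟩ := hP
  obtain ⟨l₀, r₀, h₀P, h₀N⟩ := hreal
  have h₀N' : ∀ x, x ∈ Iset l₀ r₀ → x ∉ N := by
    intro x hx hxN
    exact Set.eq_empty_iff_forall_notMem.mp h₀N x ⟨hx, hxN⟩
  -- left endpoint
  have hl : ∃ l : WithBot ℤ, (∀ p ∈ P, l ≤ (p : WithBot ℤ)) ∧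
      (∀ x ∈ N, x ≤ p₀ → ¬ l ≤ (x : WithBot ℤ)) ∧
      (∀ (l' : WithBot ℤ) (r' : WithTop ℤ), P ⊆ Iset l' r' → Iset l' r' ∩ N = ∅ →
        l ≤ l') := by
    by_cases hA : ∃ n, n ∈ N ∧ n ≤ p₀
    · obtain ⟨a, ⟨haN, hap⟩, hmax⟩ := Int.exists_greatest_of_bdd
        ⟨p₀, fun z hz => hz.2⟩ hA
      refine ⟨((a + 1 : ℤ) : WithBot ℤ), ?_, ?_, ?_⟩
      · intro p hp
        have h1 : a + 1 ≤ p := by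
          by_contra h
          push_neg at h
          have hpa : p ≤ a := by omega
          apply h₀N' a _ haN
          exact ⟨le_trans (h₀P hp).1 (by exact_mod_cast hpa),
            le_trans (by exact_mod_cast hap) (h₀P hp₀).2⟩
        exact_mod_cast h1
      · intro x hxN hxp hle
        have hxa : x ≤ a := hmax x ⟨hxN, hxp⟩
        have : a + 1 ≤ x := by exact_mod_cast hle
        omega
      · intro l' r' hP' hN'
        have haI : a ∉ Iset l' r' := fun h =>
          Set.eq_empty_iff_forall_notMem.mp hN' a ⟨h, haN⟩
        have har : (a : WithTop ℤ) ≤ r' :=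
          le_trans (by exact_mod_cast hap) (hP' hp₀).2
        have hla : ¬ l' ≤ (a : WithBot ℤ) := fun h => haI ⟨h, har⟩
        induction l' using WithBot.recBotCoe with
        | bot => exact absurd bot_le hla
        | coe m =>
          have : a < m := by
            by_contra h
            push_neg at h
            exact hla (by exact_mod_cast h)
          exact_mod_cast (by omega : a + 1 ≤ m)
    · refine ⟨⊥, fun p _ => bot_le, ?_, fun _ _ _ _ => bot_le⟩
      intro x hxN hxp _
      exact hA ⟨x, hxN, hxp⟩
  -- right endpoint
  have hr : ∃ r : WithTop ℤ, (∀ p ∈ P, (p : WithTop ℤ) ≤ r) ∧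
      (∀ x ∈ N, p₀ ≤ x → ¬ (x : WithTop ℤ) ≤ r) ∧
      (∀ (l' : WithBot ℤ) (r' : WithTop ℤ), P ⊆ Iset l' r' → Iset l' r' ∩ N = ∅ →
        r' ≤ r) := by
    by_cases hB : ∃ n, n ∈ N ∧ p₀ ≤ n
    · obtain ⟨b, ⟨hbN, hbp⟩, hmin⟩ := Int.exists_least_of_bdd
        ⟨p₀, fun z hz => hz.2⟩ hB
      refine ⟨((b - 1 : ℤ) : WithTop ℤ), ?_, ?_, ?_⟩
      · intro p hp
        have h1 : p ≤ b - 1 := by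
          by_contra h
          push_neg at h
          have hbp' : b ≤ p := by omega
          apply h₀N' b _ hbN
          exact ⟨le_trans (h₀P hp₀).1 (by exact_mod_cast hbp),
            le_trans (by exact_mod_cast hbp') (h₀P hp).2⟩
        exact_mod_cast h1
      · intro x hxN hxp hle
        have hxb : b ≤ x := hmin x ⟨hxN, hxp⟩
        have : x ≤ b - 1 := by exact_mod_cast hle
        omega
      · intro l' r' hP' hN'
        have hbI : b ∉ Iset l' r' := fun h =>
          Set.eq_empty_iff_forall_notMem.mp hN' b ⟨h, hbN⟩
        have hbl : l' ≤ (b : WithBot ℤ) :=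
          le_trans (hP' hp₀).1 (by exact_mod_cast hbp)
        have hrb : ¬ (b : WithTop ℤ) ≤ r' := fun h => hbI ⟨hbl, h⟩
        induction r' using WithTop.recTopCoe with
        | top => exact absurd le_top hrb
        | coe m =>
          have : m < b := by
            by_contra h
            push_neg at h
            exact hrb (by exact_mod_cast h)
          exact_mod_cast (by omega : m ≤ b - 1)
    · refine ⟨⊤, fun p _ => le_top, ?_, fun _ _ _ _ => le_top⟩
      intro x hxN hxp _
      exact hB ⟨x, hxN, hxp⟩
  obtain ⟨l, hl1, hl2, hl3⟩ := hl
  obtain ⟨r, hr1, hr2, hr3⟩ := hr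
  refine ⟨l, r, ⟨fun p hp => ⟨hl1 p hp, hr1 p hp⟩, ?_⟩, fun l' r' ⟨h1, h2⟩ =>
    ⟨hl3 l' r' h1 h2, hr3 l' r' h1 h2⟩⟩
  ext x
  simp only [Set.mem_inter_iff, Set.mem_empty_iff_false, iff_false, not_and]
  intro hx hxN
  rcases le_total x p₀ with h | h
  · exact hl2 x hxN h hx.1
  · exact hr2 x hxN h hx.2
end

section
/- Let n : ℕ and P N : Set (Fin n → ℤ), and suppose some hyperrectangle is consistent with the sample (P, N). Then there exists a hyperrectangle (lo, hi) consistent with (P, N) that is maximal: for every hyperrectangle (lo', hi') consistent with (P, N), if R(lo, hi) ⊆ R(lo', hi') then R(lo', hi') = R(lo, hi). -/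
/-- The set of points in `ℤⁿ` contained in the hyperrectangle `(lo, hi)` over
`ℤ ∪ {−∞, ∞}`. -/
def Rset (n : ℕ) (lo : Fin n → WithBot ℤ) (hi : Fin n → WithTop ℤ) : Set (Fin n → ℤ) :=
  {x : Fin n → ℤ | ∀ i : Fin n, lo i ≤ (x i : WithBot ℤ) ∧ (x i : WithTop ℤ) ≤ hi i}

namespace MaxRectAux

abbrev Pair (n : ℕ) := (Fin n → WithBot ℤ) × (Fin n → WithTop ℤ)

/-- `Ext p q` means the rectangle `q` extends `p` componentwise. -/
def Ext {n : ℕ} (p q : Pair n) : Prop := ∀ i, q.1 i ≤ p.1 i ∧ p.2 i ≤ q.2 i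

lemma ext_refl {n : ℕ} (p : Pair n) : Ext p p := fun _ => ⟨le_refl _, le_refl _⟩

lemma ext_trans {n : ℕ} {p q r : Pair n} (h1 : Ext p q) (h2 : Ext q r) : Ext p r :=
  fun i => ⟨le_trans (h2 i).1 (h1 i).1, le_trans (h1 i).2 (h2 i).2⟩

lemma ext_subset {n : ℕ} {p q : Pair n} (h : Ext p q) :
    Rset n p.1 p.2 ⊆ Rset n q.1 q.2 :=
  fun _ hx i => ⟨le_trans (h i).1 (hx i).1, le_trans (hx i).2 (h i).2⟩

/-- In a chain, any finite family has an upper bound in the chain, provided the chain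
is nonempty. -/
lemma chain_finmax {T : Type*} {r : T → T → Prop} (hrefl : ∀ a, r a a)
    (htrans : ∀ {a b c : T}, r a b → r b c → r a c) {c : Set T} (hc : IsChain r c)
    {y : T} (hy : y ∈ c) : ∀ {k : ℕ} (g : Fin k → T), (∀ j, g j ∈ c) →
      ∃ z ∈ c, ∀ j, r (g j) z := by
  intro k
  induction k with
  | zero => exact fun g _ => ⟨y, hy, fun j => j.elim0⟩
  | succ k ih =>
    intro g hg
    obtain ⟨z, hz, hzb⟩ := ih (g ∘ Fin.succ) (fun j => hg _)
    rcases eq_or_ne (g 0) z with h | h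
    · exact ⟨z, hz, fun j => Fin.cases (h ▸ hrefl _) (fun j => hzb j) j⟩
    · rcases hc (hg 0) hz h with h' | h'
      · exact ⟨z, hz, fun j => Fin.cases h' (fun j => hzb j) j⟩
      · exact ⟨g 0, hg 0, fun j => Fin.cases (hrefl _) (fun j => htrans (hzb j) h') j⟩

end MaxRectAux

open MaxRectAux in
/-- every realizable positive/negative sample over hyperrectangles admits
a maximal consistent hyperrectangle. -/
theorem exists_maximal_consistent_hyperrectangle (n : ℕ) (P N : Set (Fin n → ℤ))
    (hreal : ∃ (lo : Fin n → WithBot ℤ) (hi : Fin n → WithTop ℤ),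
      P ⊆ Rset n lo hi ∧ Rset n lo hi ∩ N = ∅) :
    ∃ (lo : Fin n → WithBot ℤ) (hi : Fin n → WithTop ℤ),
      (P ⊆ Rset n lo hi ∧ Rset n lo hi ∩ N = ∅) ∧
      ∀ (lo' : Fin n → WithBot ℤ) (hi' : Fin n → WithTop ℤ),
        (P ⊆ Rset n lo' hi' ∧ Rset n lo' hi' ∩ N = ∅) →
        Rset n lo hi ⊆ Rset n lo' hi' → Rset n lo' hi' = Rset n lo hi := by
  classical
  by_cases hne : ∃ (lo : Fin n → WithBot ℤ) (hi : Fin n → WithTop ℤ),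
      (P ⊆ Rset n lo hi ∧ Rset n lo hi ∩ N = ∅) ∧ (Rset n lo hi).Nonempty
  · -- there is a nonempty consistent rectangle; use Zorn
    obtain ⟨lo0, hi0, hc0, hne0⟩ := hne
    -- subtype of consistent nonempty rectangles
    let T := {p : Pair n // (P ⊆ Rset n p.1 p.2 ∧ Rset n p.1 p.2 ∩ N = ∅) ∧
      (Rset n p.1 p.2).Nonempty}
    let r : T → T → Prop := fun a b => Ext a.1 b.1
    have hrrefl : ∀ a : T, r a a := fun a => ext_refl a.1
    have hrtrans : ∀ {a b c : T}, r a b → r b c → r a c :=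
      fun h1 h2 => ext_trans h1 h2
    have hchains : ∀ c, IsChain r c → ∃ ub, ∀ a ∈ c, r a ub := by
      intro c hc
      rcases c.eq_empty_or_nonempty with rfl | hcne
      · exact ⟨⟨(lo0, hi0), hc0, hne0⟩, fun a ha => absurd ha (Set.notMem_empty a)⟩
      obtain ⟨y, hy⟩ := hcne
      -- construct the lower bounds of the union rectangle
      have keyL : ∀ i : Fin n, ∃ l : WithBot ℤ, (∀ q ∈ c, l ≤ (q : T).1.1 i) ∧
          (∀ m : ℤ, l ≤ (m : WithBot ℤ) → ∃ p ∈ c, (p : T).1.1 i ≤ (m : WithBot ℤ)) := by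
        intro i
        by_cases h : ∃ p ∈ c, ∀ q ∈ c, (p : T).1.1 i ≤ (q : T).1.1 i
        · obtain ⟨p, hp, hmin⟩ := h
          exact ⟨p.1.1 i, hmin, fun m hm => ⟨p, hp, hm⟩⟩
        · refine ⟨⊥, fun q _ => bot_le, fun m hm => ?_⟩
          by_contra hno
          push_neg at hno
          have hbdd : ∀ p ∈ c, (m : WithBot ℤ) < (p : T).1.1 i := hno
          have hval : ∀ p ∈ c, ∃ z : ℤ, (z : WithBot ℤ) = (p : T).1.1 i := by
            intro p hp
            refine WithBot.ne_bot_iff_exists.mp ?_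
            intro hb
            exact absurd (hb ▸ hbdd p hp) (not_lt_bot)
          have hinh : ∃ z : ℤ, ∃ p ∈ c, (p : T).1.1 i = (z : WithBot ℤ) := by
            obtain ⟨z, hz⟩ := hval y hy
            exact ⟨z, y, hy, hz.symm⟩
          have hbd : ∃ b : ℤ, ∀ z : ℤ, (∃ p ∈ c, (p : T).1.1 i = (z : WithBot ℤ)) → b ≤ z := by
            refine ⟨m, fun z hz => ?_⟩
            obtain ⟨p, hp, he⟩ := hz
            have := hbdd p hp
            rw [he] at this
            exact_mod_cast this.le
          obtain ⟨lb, ⟨p, hp, hpe⟩, hlb⟩ := Int.exists_least_of_bdd hbd hinh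
          apply h
          refine ⟨p, hp, fun q hq => ?_⟩
          obtain ⟨v, hv⟩ := hval q hq
          rw [hpe, ← hv, WithBot.coe_le_coe]
          exact hlb v ⟨q, hq, hv.symm⟩
      have keyH : ∀ i : Fin n, ∃ h : WithTop ℤ, (∀ q ∈ c, (q : T).1.2 i ≤ h) ∧
          (∀ m : ℤ, (m : WithTop ℤ) ≤ h → ∃ p ∈ c, (m : WithTop ℤ) ≤ (p : T).1.2 i) := by
        intro i
        by_cases h : ∃ p ∈ c, ∀ q ∈ c, (q : T).1.2 i ≤ (p : T).1.2 i
        · obtain ⟨p, hp, hmax⟩ := h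
          exact ⟨p.1.2 i, hmax, fun m hm => ⟨p, hp, hm⟩⟩
        · refine ⟨⊤, fun q _ => le_top, fun m hm => ?_⟩
          by_contra hno
          push_neg at hno
          have hbdd : ∀ p ∈ c, (p : T).1.2 i < (m : WithTop ℤ) := hno
          have hval : ∀ p ∈ c, ∃ z : ℤ, (z : WithTop ℤ) = (p : T).1.2 i := by
            intro p hp
            refine WithTop.ne_top_iff_exists.mp ?_
            intro hb
            exact absurd (hb ▸ hbdd p hp) (not_top_lt)
          have hinh : ∃ z : ℤ, ∃ p ∈ c, (p : T).1.2 i = (z : WithTop ℤ) := by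
            obtain ⟨z, hz⟩ := hval y hy
            exact ⟨z, y, hy, hz.symm⟩
          have hbd : ∃ b : ℤ, ∀ z : ℤ, (∃ p ∈ c, (p : T).1.2 i = (z : WithTop ℤ)) → z ≤ b := by
            refine ⟨m, fun z hz => ?_⟩
            obtain ⟨p, hp, he⟩ := hz
            have := hbdd p hp
            rw [he] at this
            exact_mod_cast this.le
          obtain ⟨ub, ⟨p, hp, hpe⟩, hub⟩ := Int.exists_greatest_of_bdd hbd hinh
          apply h
          refine ⟨p, hp, fun q hq => ?_⟩
          obtain ⟨v, hv⟩ := hval q hq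
          rw [hpe, ← hv, WithTop.coe_le_coe]
          exact hub v ⟨q, hq, hv.symm⟩
      choose L hL1 hL2 using keyL
      choose H hH1 hH2 using keyH
      have hub_ext : ∀ q ∈ c, Ext (q : T).1 (L, H) :=
        fun q hq i => ⟨hL1 i q hq, hH1 i q hq⟩
      have hPub : P ⊆ Rset n L H := by
        intro x hx i
        exact ⟨le_trans (hL1 i y hy) ((y.2.1.1 hx) i).1,
          le_trans ((y.2.1.1 hx) i).2 (hH1 i y hy)⟩
      have hNub : Rset n L H ∩ N = ∅ := by
        rw [Set.eq_empty_iff_forall_notMem]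
        rintro x ⟨hxR, hxN⟩
        choose p hp hple using fun i => hL2 i (x i) ((hxR i).1)
        choose q hq hqle using fun i => hH2 i (x i) ((hxR i).2)
        obtain ⟨z1, hz1, hz1b⟩ := chain_finmax hrrefl hrtrans hc hy p hp
        obtain ⟨z2, hz2, hz2b⟩ := chain_finmax hrrefl hrtrans hc hy q hq
        obtain ⟨z, hz, hzb⟩ := chain_finmax hrrefl hrtrans hc hy ![z1, z2]
          (by intro j; fin_cases j <;> assumption)
        have h1 : r z1 z := hzb 0
        have h2 : r z2 z := hzb 1
        have hxz : x ∈ Rset n z.1.1 z.1.2 := by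
          intro i
          constructor
          · exact le_trans ((hrtrans (hz1b i) h1) i).1 (hple i)
          · exact le_trans (hqle i) ((hrtrans (hz2b i) h2) i).2
        have := z.2.1.2
        rw [Set.eq_empty_iff_forall_notMem] at this
        exact this x ⟨hxz, hxN⟩
      have hneub : (Rset n L H).Nonempty := by
        obtain ⟨x, hx⟩ := y.2.2
        exact ⟨x, ext_subset (hub_ext y hy) hx⟩
      exact ⟨⟨(L, H), ⟨hPub, hNub⟩, hneub⟩, fun a ha => hub_ext a ha⟩
    obtain ⟨m, hm⟩ := exists_maximal_of_chains_bounded hchains hrtrans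
    refine ⟨m.1.1, m.1.2, m.2.1, ?_⟩
    intro lo' hi' hcons' hsub
    have hne' : (Rset n lo' hi').Nonempty := m.2.2.mono hsub
    have hma : Ext m.1 (lo', hi') := by
      intro i
      obtain ⟨x, hx⟩ := m.2.2
      constructor
      · -- lo' i ≤ m.1.1 i
        rcases eq_or_ne (m.1.1 i) ⊥ with hb | hb
        · rw [hb]
          refine le_of_eq ?_
          by_contra hne''
          obtain ⟨b, hbv0⟩ := WithBot.ne_bot_iff_exists.mp hne''
          have hbv : (b : WithBot ℤ) = lo' i := hbv0
          set w : ℤ := min (x i) (b - 1) with hwdef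
          have hw : Function.update x i w ∈ Rset n m.1.1 m.1.2 := by
            intro j
            rcases eq_or_ne j i with rfl | hj
            · rw [Function.update_self]
              refine ⟨hb ▸ bot_le, le_trans ?_ (hx j).2⟩
              exact_mod_cast min_le_left _ _
            · rw [Function.update_of_ne hj]
              exact hx j
          have hle := (hsub hw i).1
          rw [Function.update_self, ← hbv, WithBot.coe_le_coe] at hle
          have : w ≤ b - 1 := min_le_right _ _
          omega
        · obtain ⟨v, hv⟩ := WithBot.ne_bot_iff_exists.mp hb
          have hvx : v ≤ x i := by
            have := (hx i).1
            rw [← hv] at this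
            exact_mod_cast this
          have hw : Function.update x i v ∈ Rset n m.1.1 m.1.2 := by
            intro j
            rcases eq_or_ne j i with rfl | hj
            · rw [Function.update_self]
              exact ⟨le_of_eq hv.symm, le_trans (by exact_mod_cast hvx) (hx j).2⟩
            · rw [Function.update_of_ne hj]
              exact hx j
          have hle := (hsub hw i).1
          rw [Function.update_self] at hle
          rw [← hv]
          exact hle
      · -- m.1.2 i ≤ hi' i
        rcases eq_or_ne (m.1.2 i) ⊤ with hb | hb
        · rw [hb]
          refine le_of_eq ?_
          symm
          by_contra hne''
          obtain ⟨b, hbv0⟩ := WithTop.ne_top_iff_exists.mp hne''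
          have hbv : (b : WithTop ℤ) = hi' i := hbv0
          set w : ℤ := max (x i) (b + 1) with hwdef
          have hw : Function.update x i w ∈ Rset n m.1.1 m.1.2 := by
            intro j
            rcases eq_or_ne j i with rfl | hj
            · rw [Function.update_self]
              refine ⟨le_trans (hx j).1 ?_, hb ▸ le_top⟩
              exact_mod_cast le_max_left _ _
            · rw [Function.update_of_ne hj]
              exact hx j
          have hle := (hsub hw i).2
          rw [Function.update_self, ← hbv, WithTop.coe_le_coe] at hle
          have : b + 1 ≤ w := le_max_right _ _
          omega
        · obtain ⟨v, hv⟩ := WithTop.ne_top_iff_exists.mp hb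
          have hvx : x i ≤ v := by
            have := (hx i).2
            rw [← hv] at this
            exact_mod_cast this
          have hw : Function.update x i v ∈ Rset n m.1.1 m.1.2 := by
            intro j
            rcases eq_or_ne j i with rfl | hj
            · rw [Function.update_self]
              exact ⟨le_trans (hx j).1 (by exact_mod_cast hvx), le_of_eq hv⟩
            · rw [Function.update_of_ne hj]
              exact hx j
          have hle := (hsub hw i).2
          rw [Function.update_self] at hle
          rw [← hv]
          exact hle
    have ham : Ext (lo', hi') m.1 := hm ⟨(lo', hi'), hcons', hne'⟩ hma
    exact Set.Subset.antisymm (ext_subset ham) (ext_subset hma)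
  · -- every consistent rectangle is empty
    obtain ⟨lo, hi, hP, hN⟩ := hreal
    refine ⟨lo, hi, ⟨hP, hN⟩, ?_⟩
    intro lo' hi' hcons' _
    have h1 : Rset n lo hi = ∅ := by
      by_contra h
      exact hne ⟨lo, hi, ⟨hP, hN⟩, Set.nonempty_iff_ne_empty.mpr h⟩
    have h2 : Rset n lo' hi' = ∅ := by
      by_contra h
      exact hne ⟨lo', hi', hcons', Set.nonempty_iff_ne_empty.mpr h⟩
    rw [h1, h2]
end

section
/- Let D be a type, F : Set D → Set D be monotone, H a type with γ : H → Set D, 𝓡 : Set (Set D) a representative set for F (with respect to γ), and B ⊆ 𝓡. Let T = {X : Set D | F X = X ∧ ∀ Y ∈ B, ¬ Y ⊆ X} be the corresponding 𝓡-specification of adequate fixpoints. Then there exists a teacher for this instance: a function τ assigning to every h : H an ICE sample (P, N, I) over 𝓡 such that (progress) if γ h ∈ T then τ h = (∅, ∅, ∅), and if γ h ∉ T then γ h ∉ κ_𝓡 (τ h); and (honesty) T ⊆ κ_𝓡 (τ h) for every h. -/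
/-
The teacher answers an adequate fixpoint with the empty sample. Otherwise the hypothesis
either contains a bad element `Y`, which it returns as a negative example, or it is not a
fixpoint, in which case representativity yields `Y ⊆ γ h` and `Y' ⊆ F Y` with `Y' ⊄ γ h`, and
`(Y, Y')` is an implication violated by `γ h`. Every fixpoint `X` of the monotone `F` respects
it, since `Y ⊆ X` gives `Y' ⊆ F Y ⊆ F X = X`.
-/

/-- Consistency function for ICE samples `(P, N, I)` over sets of configurations:
a concept `X` must include every positive example, exclude (not include) every
negative example, and be closed under the implications. -/
def iceConsistent {D : Type*} (s : Set (Set D) × Set (Set D) × Set (Set D × Set D)) :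
    Set (Set D) :=
  {X : Set D | (∀ Y ∈ s.1, Y ⊆ X) ∧ (∀ Y ∈ s.2.1, ¬ Y ⊆ X) ∧
    (∀ p ∈ s.2.2, p.1 ⊆ X → p.2 ⊆ X)}

open Set

section

variable {D : Type*}

theorem iceConsistent_empty : iceConsistent ((∅, ∅, ∅) : Set (Set D) × _ × _) = univ :=
  eq_univ_of_forall fun _ => ⟨by simp, by simp, by simp⟩

theorem mem_iceConsistent_negative {X Y : Set D} :
    X ∈ iceConsistent (∅, {Y}, ∅) ↔ ¬ Y ⊆ X := by
  simp [iceConsistent]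

theorem mem_iceConsistent_implication {X Y Y' : Set D} :
    X ∈ iceConsistent (∅, ∅, {(Y, Y')}) ↔ (Y ⊆ X → Y' ⊆ X) := by
  simp [iceConsistent]

def adequateFixpoints (F : Set D → Set D) (B : Set (Set D)) : Set (Set D) :=
  {X | F X = X ∧ ∀ Y ∈ B, ¬ Y ⊆ X}

theorem Monotone.subset_of_isFixedPt_of_subset_image {F : Set D → Set D} (hF : Monotone F)
    {X Y Y' : Set D} (hX : F X = X) (hY' : Y' ⊆ F Y) (hYX : Y ⊆ X) : Y' ⊆ X :=
  hX ▸ hY'.trans (hF hYX)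

theorem exists_sample_separating_adequateFixpoints {F : Set D → Set D} (hF : Monotone F)
    {B : Set (Set D)} {X : Set D}
    (hrep : F X ≠ X → ∃ Y Y', Y ⊆ X ∧ Y' ⊆ F Y ∧ ¬ Y' ⊆ X)
    (hX : X ∉ adequateFixpoints F B) :
    ∃ s, X ∉ iceConsistent s ∧ adequateFixpoints F B ⊆ iceConsistent s := by
  by_cases hbad : ∃ Y ∈ B, Y ⊆ X
  · obtain ⟨Y, hYB, hYX⟩ := hbad
    exact ⟨(∅, {Y}, ∅), fun hXs => mem_iceConsistent_negative.1 hXs hYX,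
      fun Z hZ => mem_iceConsistent_negative.2 (hZ.2 Y hYB)⟩
  · have hnfix : F X ≠ X := fun hfix => hX ⟨hfix, fun Y hYB hYX => hbad ⟨Y, hYB, hYX⟩⟩
    obtain ⟨Y, Y', hYX, hY'FY, hY'X⟩ := hrep hnfix
    exact ⟨(∅, ∅, {(Y, Y')}), fun hXs => hY'X (mem_iceConsistent_implication.1 hXs hYX),
      fun Z hZ => mem_iceConsistent_implication.2
        (hF.subset_of_isFixedPt_of_subset_image hZ.1 hY'FY)⟩

end

theorem exists_teacher_for_adequate_fixpoints_general {D H : Type*}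
    (F : Set D → Set D) (hF : Monotone F)
    (γ : H → Set D)
    (𝓡 : Set (Set D))
    (hrep : ∀ h : H, F (γ h) ≠ γ h →
      ∃ Y ∈ 𝓡, ∃ Y' ∈ 𝓡, Y ⊆ γ h ∧ Y' ⊆ F Y ∧ ¬ Y' ⊆ γ h)
    (B : Set (Set D)) :
    ∃ τ : H → Set (Set D) × Set (Set D) × Set (Set D × Set D),
      ∀ h : H,
        (γ h ∈ {X : Set D | F X = X ∧ ∀ Y ∈ B, ¬ Y ⊆ X} → τ h = (∅, ∅, ∅)) ∧
        (γ h ∉ {X : Set D | F X = X ∧ ∀ Y ∈ B, ¬ Y ⊆ X} → γ h ∉ iceConsistent (τ h)) ∧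
        {X : Set D | F X = X ∧ ∀ Y ∈ B, ¬ Y ⊆ X} ⊆ iceConsistent (τ h) := by
  suffices ∀ h, ∃ s, (γ h ∈ adequateFixpoints F B → s = (∅, ∅, ∅)) ∧
      (γ h ∉ adequateFixpoints F B → γ h ∉ iceConsistent s) ∧
      adequateFixpoints F B ⊆ iceConsistent s by
    choose τ hτ using this
    exact ⟨τ, hτ⟩
  intro h
  by_cases hT : γ h ∈ adequateFixpoints F B
  · exact ⟨(∅, ∅, ∅), fun _ => rfl, absurd hT, iceConsistent_empty ▸ subset_univ _⟩
  · have hviolation : F (γ h) ≠ γ h → ∃ Y Y', Y ⊆ γ h ∧ Y' ⊆ F Y ∧ ¬ Y' ⊆ γ h := fun hnfix =>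
      let ⟨Y, _, Y', _, hY⟩ := hrep h hnfix
      ⟨Y, Y', hY⟩
    obtain ⟨s, hXs, hTs⟩ := exists_sample_separating_adequateFixpoints hF hviolation hT
    exact ⟨s, fun hT' => absurd hT' hT, fun _ => hXs, hTs⟩

/-- for a monotone transformer `F`, a representative set `𝓡`, and a set
`B ⊆ 𝓡` of bad elements, there is a teacher for the `𝓡`-specification of adequate
fixpoints with respect to ICE samples over `𝓡`. -/
theorem exists_teacher_for_adequate_fixpoints {D H : Type*}
    (F : Set D → Set D) (hF : Monotone F)
    (γ : H → Set D)
    (𝓡 : Set (Set D))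
    (hrep : ∀ h : H, F (γ h) ≠ γ h →
      ∃ Y ∈ 𝓡, ∃ Y' ∈ 𝓡, Y ⊆ γ h ∧ Y' ⊆ F Y ∧ ¬ Y' ⊆ γ h)
    (B : Set (Set D)) (hB : B ⊆ 𝓡) :
    ∃ τ : H → Set (Set D) × Set (Set D) × Set (Set D × Set D),
      ∀ h : H,
        (γ h ∈ {X : Set D | F X = X ∧ ∀ Y ∈ B, ¬ Y ⊆ X} → τ h = (∅, ∅, ∅)) ∧
        (γ h ∉ {X : Set D | F X = X ∧ ∀ Y ∈ B, ¬ Y ⊆ X} → γ h ∉ iceConsistent (τ h)) ∧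
        {X : Set D | F X = X ∧ ∀ Y ∈ B, ¬ Y ⊆ X} ⊆ iceConsistent (τ h) :=
  exists_teacher_for_adequate_fixpoints_general F hF γ 𝓡 hrep B
end
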